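/- arXiv:2501.06883 — 2 statements merged into one kernel-verified Lean document; each statement's English description precedes it below -/
import Mathlib

section
/- Let p be a prime, r ≥ 1 an integer, and suppose f(x) ∈ ℚ[x] is a p^r-Dumas polynomial of degree d ≥ 1, i.e., f is p^r-pure and gcd(r, d) = 1. Then the n-th iterate f^n(x) is irreducible over ℚ for every integer n ≥ 1. -/
open Polynomial

/-- The `n`-th compositional iterate of `f`: `f^0 = X`, `f^{n+1} = f ∘ f^n`. -/
noncomputable def polyIter (f : Polynomial ℚ) : ℕ → Polynomial ℚ
  | 0 => Polynomial.X
  | n + 1 => f.comp (polyIter f n)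

/-- The `p`-adic valuation of a rational number, viewed as a rational number. -/
def nuQ (p : ℕ) (x : ℚ) : ℚ := (padicValRat p x : ℚ)

/-- `NP_p(h)` has successive vertices `(xs 0, ys 0), …, (xs t, ys t)`:
the corresponding coefficients are nonzero and have the prescribed valuations,
the slopes are strictly increasing, and every point of the Newton diagram lies
on or above the polygon. -/
def HasNPVertices (p : ℕ) (h : Polynomial ℚ) (t : ℕ) (xs : ℕ → ℕ) (ys : ℕ → ℚ) : Prop :=
  h.coeff 0 ≠ 0 ∧
  xs 0 = 0 ∧ xs t = h.natDegree ∧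
  (∀ s, s < t → xs s < xs (s + 1)) ∧
  (∀ s, s ≤ t → h.coeff (h.natDegree - xs s) ≠ 0 ∧
      nuQ p (h.coeff (h.natDegree - xs s)) = ys s) ∧
  (∀ s, 1 ≤ s → s < t →
      (ys s - ys (s - 1)) / ((xs s : ℚ) - (xs (s - 1) : ℚ)) <
        (ys (s + 1) - ys s) / ((xs (s + 1) : ℚ) - (xs s : ℚ))) ∧
  (∀ s, 1 ≤ s → s ≤ t → ∀ i, h.coeff i ≠ 0 →
      xs (s - 1) ≤ h.natDegree - i → h.natDegree - i ≤ xs s →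
      ys (s - 1) + ((ys s - ys (s - 1)) / ((xs s : ℚ) - (xs (s - 1) : ℚ))) *
          (((h.natDegree - i : ℕ) : ℚ) - (xs (s - 1) : ℚ)) ≤ nuQ p (h.coeff i))

/-- The number of irreducible factors of a polynomial over `ℚ`,
counted with multiplicity. -/
noncomputable def numFactors (P : Polynomial ℚ) : ℕ :=
  (UniqueFactorizationMonoid.factors P).card

/-- `f` is `p^r`-pure. -/
def IsPpure (p r : ℕ) (f : Polynomial ℚ) : Prop :=
  f.coeff 0 ≠ 0 ∧
  padicValRat p f.leadingCoeff = 0 ∧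
  padicValRat p (f.coeff 0) = (r : ℤ) ∧
  ∀ i, 0 < i → i < f.natDegree → f.coeff i ≠ 0 →
    (r : ℚ) / (f.natDegree : ℚ) ≤ nuQ p (f.coeff i) / ((f.natDegree : ℚ) - (i : ℚ))

/-!
Purity says that the Newton polygon of `f` at `p` is the single segment from `(0, r)` to
`(d, 0)`. For `d ≥ 2` this is preserved by composing pure polynomials: the constant term
`f(F(0))` is dominated by `f(0)`, and each term `f_i F^i` lies above the segment of slope
`-r/(dD)`. Hence `f^n` is pure of degree `d^n`. A single-segment Newton polygon passes to every
factor, because the extreme points of a product's Newton diagram on a supporting line are sums of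
those of the factors. A factor of degree `m` would then force `r m / d^n ∈ ℤ`, which
`gcd(r, d) = 1` excludes for `0 < m < d^n`.
-/

open Polynomial

variable {p : ℕ}

section Valuation

variable [Fact p.Prime]

lemma nuQ_mul {x y : ℚ} (hx : x ≠ 0) (hy : y ≠ 0) : nuQ p (x * y) = nuQ p x + nuQ p y := by
  simp [nuQ, padicValRat.mul hx hy]

lemma nuQ_pow (x : ℚ) (k : ℕ) : nuQ p (x ^ k) = k * nuQ p x := by
  simp [nuQ, padicValRat.pow x]

lemma min_nuQ_le_nuQ_add {x y : ℚ} (hxy : x + y ≠ 0) :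
    min (nuQ p x) (nuQ p y) ≤ nuQ p (x + y) := by
  simpa [nuQ] using (Int.cast_le (R := ℚ)).2 (padicValRat.min_le_padicValRat_add (p := p) hxy)

variable {ι : Type*} {s : Finset ι} {t : ι → ℚ} {c : ℚ}

lemma le_nuQ_sum (h : ∀ i ∈ s, t i ≠ 0 → c ≤ nuQ p (t i)) :
    ∑ i ∈ s, t i ≠ 0 → c ≤ nuQ p (∑ i ∈ s, t i) := by
  refine Finset.sum_induction t (fun x => x ≠ 0 → c ≤ nuQ p x) (fun x y hx hy hxy => ?_)
    (fun h => absurd rfl h) h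
  rcases eq_or_ne x 0 with rfl | hx0
  · simpa using hy (by simpa using hxy)
  rcases eq_or_ne y 0 with rfl | hy0
  · simpa using hx hx0
  exact (le_min (hx hx0) (hy hy0)).trans (min_nuQ_le_nuQ_add hxy)

lemma lt_nuQ_sum (h : ∀ i ∈ s, t i ≠ 0 → c < nuQ p (t i)) :
    ∑ i ∈ s, t i ≠ 0 → c < nuQ p (∑ i ∈ s, t i) := by
  refine Finset.sum_induction t (fun x => x ≠ 0 → c < nuQ p x) (fun x y hx hy hxy => ?_)
    (fun h => absurd rfl h) h
  rcases eq_or_ne x 0 with rfl | hx0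
  · simpa using hy (by simpa using hxy)
  rcases eq_or_ne y 0 with rfl | hy0
  · simpa using hx hx0
  exact (lt_min (hx hx0) (hy hy0)).trans_le (min_nuQ_le_nuQ_add hxy)

lemma nuQ_sum_eq_of_lt [DecidableEq ι] {a : ι} (ha : a ∈ s) (hta : t a ≠ 0)
    (h : ∀ i ∈ s, i ≠ a → t i ≠ 0 → nuQ p (t a) < nuQ p (t i)) :
    ∑ i ∈ s, t i ≠ 0 ∧ nuQ p (∑ i ∈ s, t i) = nuQ p (t a) := by
  rw [← Finset.add_sum_erase s t ha]
  by_cases hrest : ∑ i ∈ s.erase a, t i = 0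
  · simpa [hrest] using hta
  have hlt : nuQ p (t a) < nuQ p (∑ i ∈ s.erase a, t i) :=
    lt_nuQ_sum (fun i hi => h i (Finset.mem_of_mem_erase hi) (Finset.ne_of_mem_erase hi)) hrest
  have hne : t a + ∑ i ∈ s.erase a, t i ≠ 0 := fun h0 => by
    rw [eq_neg_of_add_eq_zero_right h0] at hlt
    simp [nuQ, padicValRat.neg] at hlt
  refine ⟨hne, ?_⟩
  simp only [nuQ] at hlt ⊢
  rw [padicValRat.add_eq_of_lt hne hta hrest (by exact_mod_cast hlt)]

end Valuation

/-- The Newton diagram `{(j, ν_p(G_j))}` of `G` lies on or above the line `y = c - s x`. -/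
def AboveLine (p : ℕ) (s c : ℚ) (G : ℚ[X]) : Prop :=
  ∀ j, G.coeff j ≠ 0 → c ≤ nuQ p (G.coeff j) + s * j

namespace AboveLine

variable {s c c' : ℚ} {G H : ℚ[X]}

lemma mono (h : AboveLine p s c G) (hc : c' ≤ c) : AboveLine p s c' G :=
  fun j hj => hc.trans (h j hj)

lemma of_slope_le {s' : ℚ} {N : ℕ} (h : AboveLine p s c G) (hs : s' ≤ s)
    (hN : G.natDegree ≤ N) : AboveLine p s' (c - (s - s') * N) G := by
  intro j hj
  have hjN : (j : ℚ) ≤ N := by exact_mod_cast (le_natDegree_of_ne_zero hj).trans hN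
  nlinarith [h j hj, mul_le_mul_of_nonneg_left hjN (sub_nonneg.2 hs)]

lemma reverse (h : AboveLine p s c G) :
    AboveLine p (-s) (c - s * G.natDegree) G.reverse := by
  intro k hk
  have hkG : k ≤ G.natDegree := (le_natDegree_of_ne_zero hk).trans G.reverse_natDegree_le
  rw [coeff_reverse, revAt_le hkG] at hk ⊢
  have hval := h _ hk
  push_cast [hkG] at hval
  linarith

variable [Fact p.Prime]

lemma mul (hG : AboveLine p s c G) (hH : AboveLine p s c' H) :
    AboveLine p s (c + c') (G * H) := by
  intro k hk
  rw [coeff_mul] at hk ⊢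
  have hsum := le_nuQ_sum (p := p) (c := c + c' - s * k) (fun ⟨i, j⟩ hij hne => by
    have hi := hG i (left_ne_zero_of_mul hne)
    have hj := hH j (right_ne_zero_of_mul hne)
    rw [Finset.HasAntidiagonal.mem_antidiagonal] at hij
    rw [nuQ_mul (left_ne_zero_of_mul hne) (right_ne_zero_of_mul hne), ← hij]
    push_cast
    linarith) hk
  linarith

lemma pow (h : AboveLine p s c G) (n : ℕ) : AboveLine p s (n * c) (G ^ n) := by
  induction n with
  | zero =>
    intro j hj
    obtain rfl : j = 0 := by by_contra h0; simp [coeff_one, h0] at hj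
    simp [nuQ]
  | succ n ih => simpa [pow_succ, add_mul] using ih.mul h

lemma C_mul (h : AboveLine p s c G) (a : ℚ) : AboveLine p s (nuQ p a + c) (C a * G) := by
  intro j hj
  rw [coeff_C_mul] at hj ⊢
  rw [nuQ_mul (left_ne_zero_of_mul hj) (right_ne_zero_of_mul hj)]
  linarith [h j (right_ne_zero_of_mul hj)]

lemma sum {ι : Type*} {S : Finset ι} {G : ι → ℚ[X]}
    (h : ∀ i ∈ S, AboveLine p s c (G i)) :
    AboveLine p s c (∑ i ∈ S, G i) := by
  intro j hj
  rw [finsetSum_coeff] at hj ⊢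
  have hsum := le_nuQ_sum (p := p) (c := c - s * j) (fun i hi hne => by linarith [h i hi j hne]) hj
  linarith

end AboveLine

/-- `(a, ν_p(G_a))` is the leftmost point of the Newton diagram of `G` on its supporting line
of slope `-s`. -/
def IsFirstMinimizer (p : ℕ) (s : ℚ) (G : ℚ[X]) (a : ℕ) : Prop :=
  G.coeff a ≠ 0 ∧ AboveLine p s (nuQ p (G.coeff a) + s * a) G ∧
    ∀ j < a, G.coeff j ≠ 0 → nuQ p (G.coeff a) + s * a < nuQ p (G.coeff j) + s * j

lemma exists_isFirstMinimizer (s : ℚ) {G : ℚ[X]} (hG : G ≠ 0) :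
    ∃ a, IsFirstMinimizer p s G a := by
  classical
  have hex : ∃ a, G.coeff a ≠ 0 ∧ AboveLine p s (nuQ p (G.coeff a) + s * a) G := by
    obtain ⟨a, ha, hmin⟩ := G.support.exists_min_image (fun j => nuQ p (G.coeff j) + s * j)
      (nonempty_support_iff.2 hG)
    exact ⟨a, mem_support_iff.1 ha, fun j hj => hmin j (mem_support_iff.2 hj)⟩
  refine ⟨Nat.find hex, (Nat.find_spec hex).1, (Nat.find_spec hex).2, fun j hj hGj => ?_⟩
  by_contra! hle
  exact Nat.find_min hex hj ⟨hGj, fun i hi => hle.trans ((Nat.find_spec hex).2 i hi)⟩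

/-- The Newton polygon of `F` is the single segment from `(0, ν_p(F_0))` to
`(deg F, ν_p(lead F))`, of slope `-s`. -/
def IsSegment (p : ℕ) (s : ℚ) (F : ℚ[X]) : Prop :=
  F.coeff 0 ≠ 0 ∧ AboveLine p s (nuQ p (F.coeff 0)) F ∧
    nuQ p (F.coeff 0) = nuQ p F.leadingCoeff + s * F.natDegree

section Factorization

variable [Fact p.Prime]

/-- In the coefficient of `X^(a+b)` of `G * H`, the term `G_a H_b` strictly dominates. -/
lemma IsFirstMinimizer.coeff_mul_add {s : ℚ} {G H : ℚ[X]} {a b : ℕ}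
    (ha : IsFirstMinimizer p s G a) (hb : IsFirstMinimizer p s H b) :
    (G * H).coeff (a + b) ≠ 0 ∧
      nuQ p ((G * H).coeff (a + b)) = nuQ p (G.coeff a) + nuQ p (H.coeff b) := by
  obtain ⟨hGa, hGabove, hGlt⟩ := ha
  obtain ⟨hHb, hHabove, hHlt⟩ := hb
  rw [Polynomial.coeff_mul, ← nuQ_mul hGa hHb]
  refine nuQ_sum_eq_of_lt (t := fun x => G.coeff x.1 * H.coeff x.2) (a := (a, b))
    (Finset.HasAntidiagonal.mem_antidiagonal.2 rfl) (mul_ne_zero hGa hHb)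
    fun ⟨i, j⟩ hij hne hij0 => ?_
  have hi : G.coeff i ≠ 0 := left_ne_zero_of_mul hij0
  have hj : H.coeff j ≠ 0 := right_ne_zero_of_mul hij0
  have hij' : i + j = a + b := Finset.HasAntidiagonal.mem_antidiagonal.1 hij
  have hs : s * i + s * j = s * a + s * b := by
    rw [← mul_add, ← mul_add]; norm_cast; rw [hij']
  simp only [nuQ_mul hGa hHb, nuQ_mul hi hj]
  rcases Nat.lt_or_ge i a with hia | hia
  · linarith [hGlt i hia hi, hHabove j hj]
  · have hjb : j < b := by
      by_contra
      exact hne (Prod.ext (by omega) (by omega))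
    linarith [hHlt j hjb hj, hGabove i hi]

/-- Otherwise the first minimizers `a` of `G` and `b` of `H` would give a coefficient of `G * H`
strictly below the line through `(0, ν_p(G_0 H_0))`. -/
lemma AboveLine.of_mul {s : ℚ} {G H : ℚ[X]} (h0 : (G * H).coeff 0 ≠ 0)
    (h : AboveLine p s (nuQ p ((G * H).coeff 0)) (G * H)) :
    AboveLine p s (nuQ p (G.coeff 0)) G := by
  rw [mul_coeff_zero] at h0 h
  have hG0 := left_ne_zero_of_mul h0
  have hH0 := right_ne_zero_of_mul h0
  obtain ⟨a, ha⟩ := exists_isFirstMinimizer (p := p) s (G := G) (fun hG => hG0 (by simp [hG]))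
  obtain ⟨b, hb⟩ := exists_isFirstMinimizer (p := p) s (G := H) (fun hH => hH0 (by simp [hH]))
  obtain ⟨hab, hval⟩ := ha.coeff_mul_add hb
  intro j hj
  have hF := h (a + b) hab
  rw [hval, nuQ_mul hG0 hH0] at hF
  have hGa := ha.2.1 j hj
  have hHb := hb.2.1 0 hH0
  push_cast at hF hHb
  linarith

/-- The left end of the segment is inherited from `G * H` by `G` directly, the right end by
`G.reverse`. -/
lemma IsSegment.of_mul_left {s : ℚ} {G H : ℚ[X]} (h : IsSegment p s (G * H)) :
    IsSegment p s G := by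
  obtain ⟨h0, habove, hslope⟩ := h
  have hG0 : G.coeff 0 ≠ 0 := left_ne_zero_of_mul (mul_coeff_zero G H ▸ h0)
  have hH0 : H.coeff 0 ≠ 0 := right_ne_zero_of_mul (mul_coeff_zero G H ▸ h0)
  have hG : G ≠ 0 := fun hG => hG0 (by simp [hG])
  have hH : H ≠ 0 := fun hH => hH0 (by simp [hH])
  have hGabove := habove.of_mul h0
  refine ⟨hG0, hGabove, le_antisymm ?_ ?_⟩
  · simpa [coeff_natDegree] using hGabove _ (leadingCoeff_ne_zero.2 hG)
  · have hrev := habove.reverse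
    have hc : nuQ p ((G * H).coeff 0) - s * (G * H).natDegree =
        nuQ p ((G.reverse * H.reverse).coeff 0) := by
      rw [hslope, ← reverse_mul_of_domain, coeff_zero_reverse]
      ring
    rw [hc, reverse_mul_of_domain] at hrev
    have hrev0 : (G.reverse * H.reverse).coeff 0 ≠ 0 := by
      rw [mul_coeff_zero, coeff_zero_reverse, coeff_zero_reverse]
      exact mul_ne_zero (leadingCoeff_ne_zero.2 hG) (leadingCoeff_ne_zero.2 hH)
    have hGrev0 : G.reverse.coeff G.natDegree = G.coeff 0 := by
      rw [coeff_reverse, revAt_le le_rfl, Nat.sub_self]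
    have := hrev.of_mul hrev0 G.natDegree (hGrev0 ▸ hG0)
    rw [hGrev0, coeff_zero_reverse] at this
    linarith

theorem IsSegment.irreducible {s : ℚ} {F : ℚ[X]} (hF : IsSegment p s F)
    (hD : 0 < F.natDegree)
    (hs : ∀ m : ℕ, 0 < m → m < F.natDegree → ∀ z : ℤ, s * m ≠ z) :
    Irreducible F := by
  have hF0 : F ≠ 0 := fun h => hF.1 (by simp [h])
  refine (irreducible_iff_lt_natDegree_lt hF0 (not_isUnit_of_natDegree_pos F hD)).2
    fun q _ hq ⟨g, hqg⟩ => ?_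
  obtain ⟨-, -, hslope⟩ := (hqg ▸ hF).of_mul_left
  rw [Finset.mem_Ioc] at hq
  refine hs q.natDegree hq.1 (by omega)
    (padicValRat p (q.coeff 0) - padicValRat p q.leadingCoeff) ?_
  simp only [nuQ] at hslope
  push_cast
  linarith

end Factorization

lemma div_mul_ne_intCast_of_coprime {r D m : ℕ} (hco : r.Coprime D) (hm : 0 < m) (hmD : m < D)
    (z : ℤ) :
    (r / D : ℚ) * m ≠ z := by
  intro h
  have hD : (D : ℚ) ≠ 0 := Nat.cast_ne_zero.2 (by omega)
  have hZ : ((r * m : ℕ) : ℤ) = z * D := by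
    rw [div_mul_eq_mul_div, div_eq_iff hD] at h
    exact_mod_cast h
  have hdvd : D ∣ m :=
    hco.symm.dvd_of_dvd_mul_left (Int.natCast_dvd_natCast.1 ⟨z, by rw [hZ, mul_comm]⟩)
  exact absurd (Nat.le_of_dvd hm hdvd) (by omega)

/-- Weighted form of `IsPpure`: the Newton polygon of `F` is the segment from `(0, r)` to
`(deg F, 0)`. -/
def IsPure (p r : ℕ) (F : ℚ[X]) : Prop :=
  F.coeff 0 ≠ 0 ∧ nuQ p (F.coeff 0) = r ∧ nuQ p F.leadingCoeff = 0 ∧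
    AboveLine p (r / F.natDegree) r F

lemma IsPpure.isPure {r : ℕ} {f : ℚ[X]} (hf : IsPpure p r f) (hd : 0 < f.natDegree) :
    IsPure p r f := by
  obtain ⟨h0, hl, hc, hmid⟩ := hf
  have hdQ : (0 : ℚ) < f.natDegree := by exact_mod_cast hd
  refine ⟨h0, by simp [nuQ, hc], by simp [nuQ, hl], fun j hj => ?_⟩
  rcases Nat.eq_zero_or_pos j with rfl | hj0
  · simp [nuQ, hc]
  rcases (le_natDegree_of_ne_zero hj).lt_or_eq with hjd | rfl
  · have hdj : (0 : ℚ) < f.natDegree - j := sub_pos.2 (by exact_mod_cast hjd)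
    have hratio := hmid j hj0 hjd hj
    rw [div_le_div_iff₀ hdQ hdj] at hratio
    have hsplit : (r : ℚ) / f.natDegree * j = r - r * (f.natDegree - j) / f.natDegree := by
      field_simp; ring
    have hval : (r : ℚ) * (f.natDegree - j) / f.natDegree ≤ nuQ p (f.coeff j) := by
      rwa [div_le_iff₀ hdQ]
    linarith
  · simp [coeff_natDegree, nuQ, hl, hdQ.ne']

lemma IsPure.isSegment {r : ℕ} {F : ℚ[X]} (hF : IsPure p r F) (hD : F.natDegree ≠ 0) :
    IsSegment p (r / F.natDegree) F := by
  obtain ⟨h0, h0v, hl, habove⟩ := hF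
  refine ⟨h0, h0v ▸ habove, ?_⟩
  rw [h0v, hl, zero_add, div_mul_cancel₀ _ (Nat.cast_ne_zero.2 hD)]

lemma natDegree_polyIter (f : ℚ[X]) (n : ℕ) : (polyIter f n).natDegree = f.natDegree ^ n := by
  induction n with
  | zero => simp [polyIter]
  | succ n ih => rw [polyIter, natDegree_comp, ih, pow_succ']

section Composition

variable [Fact p.Prime] {r : ℕ} {f F : ℚ[X]}

lemma IsPure.nuQ_eval (hf : IsPure p r f) (hr : 0 < r) (hd : 2 ≤ f.natDegree) {c : ℚ}
    (hc : c ≠ 0) (hcv : nuQ p c = r) : f.eval c ≠ 0 ∧ nuQ p (f.eval c) = r := by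
  obtain ⟨h0, h0v, -, habove⟩ := hf
  have hdQ : (2 : ℚ) ≤ f.natDegree := by exact_mod_cast hd
  have hrQ : (0 : ℚ) < r := by exact_mod_cast hr
  rw [eval_eq_sum_range]
  have hdom := nuQ_sum_eq_of_lt (p := p) (t := fun i => f.coeff i * c ^ i)
    (Finset.mem_range.2 (Nat.succ_pos f.natDegree)) (by simpa using h0) fun i _ hi hti => by
      have hfi := left_ne_zero_of_mul hti
      have hi1 : (1 : ℚ) ≤ i := by exact_mod_cast Nat.one_le_iff_ne_zero.2 hi
      have hfiv := habove i hfi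
      simp only [pow_zero, mul_one, h0v]
      rw [nuQ_mul hfi (pow_ne_zero _ hc), nuQ_pow, hcv]
      have hlt : (r : ℚ) / f.natDegree * i < i * r := by
        rw [div_mul_eq_mul_div, div_lt_iff₀ (by linarith)]
        nlinarith [mul_pos hrQ (by linarith : (0 : ℚ) < i)]
      linarith
  simpa [h0v] using hdom

lemma IsPure.comp (hf : IsPure p r f) (hF : IsPure p r F) (hr : 0 < r) (hd : 2 ≤ f.natDegree)
    (hD : F.natDegree ≠ 0) : IsPure p r (f.comp F) := by
  obtain ⟨hF0, hF0v, hFl, hFabove⟩ := hF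
  have hconst := hf.nuQ_eval hr hd hF0 hF0v
  rw [coeff_zero_eq_eval_zero F, ← eval_comp, ← coeff_zero_eq_eval_zero] at hconst
  obtain ⟨hf0, -, hfl, hfabove⟩ := hf
  have hlead : nuQ p (f.comp F).leadingCoeff = 0 := by
    rw [leadingCoeff_comp hD, nuQ_mul (leadingCoeff_ne_zero.2 fun h => hf0 (by simp [h]))
      (pow_ne_zero _ (leadingCoeff_ne_zero.2 fun h => hF0 (by simp [h]))), nuQ_pow, hfl, hFl]
    ring
  refine ⟨hconst.1, hconst.2, hlead, ?_⟩
  rw [natDegree_comp, comp_eq_sum_left]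
  refine AboveLine.sum fun i hi => ?_
  have hD' : (0 : ℚ) < F.natDegree := by exact_mod_cast Nat.pos_of_ne_zero hD
  have hd1 : (1 : ℚ) ≤ f.natDegree := by exact_mod_cast (by omega : 1 ≤ f.natDegree)
  have hslope : (r : ℚ) / (f.natDegree * F.natDegree : ℕ) ≤ r / F.natDegree :=
    div_le_div_of_nonneg_left (by positivity) hD'
      (by push_cast; exact le_mul_of_one_le_left hD'.le hd1)
  have hterm := ((hFabove.pow i).of_slope_le hslope natDegree_pow_le).C_mul (f.coeff i)
  refine hterm.mono ?_
  have hfi := hfabove i (mem_support_iff.1 hi)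
  have hshift : (i : ℚ) * r - (r / F.natDegree - r / (f.natDegree * F.natDegree : ℕ)) *
      (i * F.natDegree : ℕ) = r / f.natDegree * i := by
    push_cast; field_simp; ring
  linarith

lemma isPure_polyIter (hf : IsPure p r f) (hr : 0 < r) (hd : 2 ≤ f.natDegree)
    {n : ℕ} (hn : 1 ≤ n) : IsPure p r (polyIter f n) := by
  induction n, hn using Nat.le_induction with
  | base => simpa [polyIter] using hf
  | succ n _ ih =>
    exact hf.comp ih hr hd (by rw [natDegree_polyIter]; exact pow_ne_zero _ (by omega))

end Composition

/-- Corollary 1.5: every iterate of a `p^r`-Dumas polynomial is irreducible over `ℚ`. -/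
theorem dumas_iterate_irreducible
    (p r : ℕ) (hp : p.Prime) (hr : 1 ≤ r)
    (f : Polynomial ℚ) (d : ℕ) (hfd : f.natDegree = d) (hd1 : 1 ≤ d)
    (hpure : IsPpure p r f) (hgcd : Nat.gcd r d = 1) :
    ∀ n : ℕ, 1 ≤ n → Irreducible (polyIter f n) := by
  have : Fact p.Prime := ⟨hp⟩
  intro n hn
  have hdeg : (polyIter f n).natDegree = d ^ n := by rw [natDegree_polyIter, hfd]
  obtain rfl | hd2 := hd1.eq_or_lt
  · exact irreducible_of_degree_eq_one
      ((degree_eq_iff_natDegree_eq_of_pos one_pos).2 (by rw [hdeg, one_pow]))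
  have hD : 0 < d ^ n := by positivity
  have hpureIter := isPure_polyIter (hpure.isPure (by omega)) hr (by omega) hn
  refine (hpureIter.isSegment (by omega)).irreducible (by omega) fun m hm hmD => ?_
  rw [hdeg] at hmD ⊢
  exact div_mul_ne_intCast_of_coprime (Nat.Coprime.pow_right n hgcd) hm hmD
end

section
/- Let p be a prime and let g(x) = b_e x^e + b_{e-1} x^{e-1} + ⋯ + b_0 ∈ ℚ[x] have degree e ≥ 1 with b_0 ≠ 0. Suppose NP_p(g) has successive vertices (0, ν_p(b_e)), (e−m_1, ν_p(b_{m_1})), …, (e−m_{t−1}, ν_p(b_{m_{t−1}})), (e, ν_p(b_0)), where e = m_0 > m_1 > ⋯ > m_t = 0, and set λ_i = (ν_p(b_{m_i}) − ν_p(b_{m_{i−1}}))/(m_{i−1} − m_i) for 1 ≤ i ≤ t. Let u be an integer with u > |λ_j| for every 1 ≤ j ≤ t, and let β be a positive integer with β ≤ d and gcd(β, u) = 1. Suppose f(x) = a_d x^d + ⋯ + a_1 x + a_0 ∈ ℚ[x] has degree d with ν_p(a_d) = 0 and ν_p(a_i) ≥ (u/β)(d−i) for every 0 ≤ i ≤ d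 with a_i ≠ 0. Then the Newton polygon NP_p(g(f(x))) of the composition g ∘ f has successive vertices (0, ν_p(b_e)), (d(e−m_1), ν_p(b_{m_1})), …, (d(e−m_{t−1}), ν_p(b_{m_{t−1}})), (de, ν_p(b_0)). -/
/-!
Put `c = u / β`. The bound `ν_p(a_i) ≥ c (d - i)` on `f` is multiplicative, so the `i`-th
coefficient of `f ^ k` has valuation at least `c (k d - i)`, and the term `b_k f ^ k` of `g ∘ f`
contributes to the `i`-th coefficient only with valuation at least `ν_p(b_k) + c (d k - i)`.
Every edge of `NP_p(g)` has slope `λ < u ≤ u d / β = c d`, so by convexity all these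
contributions lie on or above the polygon of `g` stretched horizontally by `d`. At a stretched
vertex `d m_s` the contribution `b_{m_s} a_d ^ {m_s}` has valuation `ν_p(b_{m_s})` (as
`ν_p(a_d) = 0`) and all others are strictly larger, so it survives and stays a vertex.
-/

open Polynomial

section PadicAddVal

variable (p : ℕ) [Fact p.Prime]

/-- `ν_p` as an additive valuation, with `ν_p(0) = ⊤` (whereas `padicValRat p 0 = 0`). -/
noncomputable def padicAddVal : AddValuation ℚ (WithTop ℚ) :=
  AddValuation.of (fun x => if x = 0 then ⊤ else (nuQ p x : WithTop ℚ)) (by simp)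
    (by simp [nuQ])
    (fun x y => by
      by_cases hx : x = 0
      · simp [hx]
      by_cases hy : y = 0
      · simp [hy]
      by_cases hxy : x + y = 0
      · simp [hxy]
      simp only [hx, hy, hxy, if_false, ← WithTop.coe_min, WithTop.coe_le_coe, nuQ]
      exact_mod_cast padicValRat.min_le_padicValRat_add hxy)
    (fun x y => by
      by_cases hx : x = 0
      · simp [hx]
      by_cases hy : y = 0
      · simp [hy]
      simp only [mul_eq_zero, hx, hy, or_self, if_false, ← WithTop.coe_add, nuQ,
        padicValRat.mul hx hy, Int.cast_add])

variable {p}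

theorem padicAddVal_of_ne_zero {x : ℚ} (hx : x ≠ 0) : padicAddVal p x = nuQ p x :=
  if_neg hx

theorem coe_le_padicAddVal_iff {c x : ℚ} :
    (c : WithTop ℚ) ≤ padicAddVal p x ↔ (x ≠ 0 → c ≤ nuQ p x) := by
  by_cases hx : x = 0
  · simp [hx]
  · simp [padicAddVal_of_ne_zero hx, hx]

theorem padicAddVal_eq_coe_iff {c x : ℚ} :
    padicAddVal p x = c ↔ x ≠ 0 ∧ nuQ p x = c := by
  by_cases hx : x = 0
  · simp [hx]
  · simp [padicAddVal_of_ne_zero hx, hx]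

end PadicAddVal

theorem Polynomial.coeff_comp_eq_sum {R : Type*} [CommSemiring R] (g f : R[X]) (i : ℕ) :
    (g.comp f).coeff i = ∑ k ∈ g.support, g.coeff k * (f ^ k).coeff i := by
  simp only [comp_eq_sum_left, Polynomial.sum_def, finsetSum_coeff, coeff_C_mul]

section AddValuation

variable {R : Type*} [CommRing R] (v : AddValuation R (WithTop ℚ)) {f g : R[X]} {c : ℚ}
  {d : ℕ}

theorem le_addValuation_coeff_pow
    (hf : ∀ i : ℕ, ((c * (d - i) : ℚ) : WithTop ℚ) ≤ v (f.coeff i)) (k i : ℕ) :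
    ((c * (k * d - i) : ℚ) : WithTop ℚ) ≤ v ((f ^ k).coeff i) := by
  induction k generalizing i with
  | zero =>
    rcases eq_or_ne i 0 with rfl | hi
    · simp
    · simp [coeff_one, hi]
  | succ k ih =>
    rw [pow_succ, coeff_mul]
    refine v.map_le_sum fun x hx => ?_
    have hsum : (x.1 : ℚ) + x.2 = i := mod_cast Finset.HasAntidiagonal.mem_antidiagonal.mp hx
    calc ((c * ((k + 1 : ℕ) * d - i) : ℚ) : WithTop ℚ)
        = ((c * (k * d - x.1) : ℚ) : WithTop ℚ) + ((c * (d - x.2) : ℚ) : WithTop ℚ) := by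
          rw [← WithTop.coe_add, ← hsum]; congr 1; push_cast; ring
      _ ≤ v ((f ^ k).coeff x.1 * f.coeff x.2) := by
          rw [v.map_mul]; exact add_le_add (ih x.1) (hf x.2)

theorem le_addValuation_coeff_comp (hfd : f.natDegree ≤ d)
    (hf : ∀ i : ℕ, ((c * (d - i) : ℚ) : WithTop ℚ) ≤ v (f.coeff i)) {y : ℚ} {i : ℕ}
    (hg : ∀ k, g.coeff k ≠ 0 → i ≤ d * k →
      (y : WithTop ℚ) ≤ v (g.coeff k) + ((c * (d * k - i) : ℚ) : WithTop ℚ)) :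
    (y : WithTop ℚ) ≤ v ((g.comp f).coeff i) := by
  rw [coeff_comp_eq_sum]
  refine v.map_le_sum fun k hk => ?_
  by_cases hfk : (f ^ k).coeff i = 0
  · simp [hfk]
  have hik : i ≤ d * k := calc
    i ≤ (f ^ k).natDegree := le_natDegree_of_ne_zero hfk
    _ ≤ k * f.natDegree := natDegree_pow_le
    _ ≤ d * k := by rw [mul_comm]; exact Nat.mul_le_mul_right k hfd
  calc (y : WithTop ℚ) ≤ v (g.coeff k) + ((c * (d * k - i) : ℚ) : WithTop ℚ) :=
        hg k (mem_support_iff.mp hk) hik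
    _ ≤ v (g.coeff k * (f ^ k).coeff i) := by
        rw [v.map_mul, mul_comm (d : ℚ)]; gcongr; exact le_addValuation_coeff_pow v hf k i

end AddValuation

theorem addValuation_coeff_comp_mul_natDegree {K : Type*} [Field K]
    (v : AddValuation K (WithTop ℚ)) {f g : K[X]} {c : ℚ} {d : ℕ} (hd : 0 < d)
    (hfd : f.natDegree = d) (hlead : v (f.coeff d) = 0)
    (hf : ∀ i : ℕ, ((c * (d - i) : ℚ) : WithTop ℚ) ≤ v (f.coeff i))
    {a : ℕ} (ha : g.coeff a ≠ 0)
    (hg : ∀ k, g.coeff k ≠ 0 → a < k →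
      v (g.coeff a) < v (g.coeff k) + ((c * (d * k - d * a) : ℚ) : WithTop ℚ)) :
    v ((g.comp f).coeff (d * a)) = v (g.coeff a) := by
  have hlc : (f ^ a).coeff (d * a) = f.coeff d ^ a := by
    rw [mul_comm, ← hfd, coeff_pow_mul_natDegree, leadingCoeff]
  have hmain : v (g.coeff a * (f ^ a).coeff (d * a)) = v (g.coeff a) := by
    rw [v.map_mul, hlc, v.map_pow, hlead, smul_zero, add_zero]
  rw [coeff_comp_eq_sum, ← Finset.add_sum_erase _ _ (mem_support_iff.mpr ha),
    v.map_add_eq_of_lt_left, hmain]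
  rw [hmain]
  refine v.map_lt_sum (v.ne_top_iff.mpr ha) fun k hk => ?_
  obtain ⟨hka, hk⟩ := Finset.mem_erase.mp hk
  by_cases hfk : (f ^ k).coeff (d * a) = 0
  · simpa [hfk, lt_top_iff_ne_top] using v.ne_top_iff.mpr ha
  have hak : a < k := by
    refine lt_of_le_of_ne (Nat.le_of_mul_le_mul_left ?_ hd) hka.symm
    calc d * a ≤ (f ^ k).natDegree := le_natDegree_of_ne_zero hfk
      _ ≤ k * f.natDegree := natDegree_pow_le
      _ = d * k := by rw [hfd, mul_comm]
  calc v (g.coeff a) < v (g.coeff k) + ((c * (d * k - d * a) : ℚ) : WithTop ℚ) :=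
        hg k (mem_support_iff.mp hk) hak
    _ ≤ v (g.coeff k * (f ^ k).coeff (d * a)) := by
        rw [v.map_mul]
        gcongr
        simpa [mul_comm (d : ℚ)] using le_addValuation_coeff_pow v hf k (d * a)

section NewtonPolygon

variable {n : ℕ → ℕ} {y : ℕ → ℚ} {s : ℕ}

def npSlope (n : ℕ → ℕ) (y : ℕ → ℚ) (s : ℕ) : ℚ :=
  (y s - y (s - 1)) / ((n (s - 1) : ℚ) - n s)

/-- The line through the `s`-th edge, as a function of the coefficient index `α`
(the abscissa being `deg - α`). -/
def npLine (n : ℕ → ℕ) (y : ℕ → ℚ) (s : ℕ) (α : ℚ) : ℚ :=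
  y (s - 1) + npSlope n y s * (n (s - 1) - α)

theorem npLine_sub_npLine (α β : ℚ) :
    npLine n y s α - npLine n y s β = npSlope n y s * (β - α) := by
  unfold npLine; ring

theorem npLine_of_lt (h : n s < n (s - 1)) (α : ℚ) :
    npLine n y s α = y s + npSlope n y s * (n s - α) := by
  have hslope : npSlope n y s * (n (s - 1) - n s) = y s - y (s - 1) :=
    div_mul_cancel₀ _ (sub_ne_zero.mpr (by exact_mod_cast h.ne'))
  unfold npLine
  linear_combination hslope

theorem npLine_succ_le (h : n s < n (s - 1)) (hslope : npSlope n y s ≤ npSlope n y (s + 1))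
    {α : ℚ} (hα : n s ≤ α) : npLine n y (s + 1) α ≤ npLine n y s α := by
  rw [npLine_of_lt h]
  simp only [npLine, Nat.add_sub_cancel]
  nlinarith

theorem npSlope_mul (d : ℕ) : npSlope (fun s => d * n s) y s = npSlope n y s / d := by
  simp only [npSlope, Nat.cast_mul, ← mul_sub, div_div, mul_comm _ (d : ℚ)]

theorem npLine_mul {d : ℕ} (hd : d ≠ 0) (α : ℚ) :
    npLine (fun s => d * n s) y s α = npLine n y s (α / d) := by
  simp only [npLine, npSlope_mul, Nat.cast_mul]
  field_simp

theorem npSlope_eq_abscissa {N : ℕ} (hs : n s ≤ N) (hs' : n (s - 1) ≤ N) :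
    npSlope n y s =
      (y s - y (s - 1)) / (((N - n s : ℕ) : ℚ) - ((N - n (s - 1) : ℕ) : ℚ)) := by
  rw [npSlope, Nat.cast_sub hs, Nat.cast_sub hs', sub_sub_sub_cancel_left]

theorem npLine_eq_abscissa {N i : ℕ} (hs : n s ≤ N) (hs' : n (s - 1) ≤ N) (hi : i ≤ N) :
    npLine n y s i = y (s - 1) + (y s - y (s - 1)) /
      (((N - n s : ℕ) : ℚ) - ((N - n (s - 1) : ℕ) : ℚ)) *
        (((N - i : ℕ) : ℚ) - ((N - n (s - 1) : ℕ) : ℚ)) := by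
  rw [← npSlope_eq_abscissa hs hs', npLine, Nat.cast_sub hi, Nat.cast_sub hs',
    sub_sub_sub_cancel_left]

end NewtonPolygon

/-- `HasNPVertices` with the vertices indexed by the degrees `n 0 > n 1 > ⋯ > n t = 0` of the
coefficients they come from, i.e. at abscissae `n 0 - n s`. -/
structure HasNPVerticesAtCoeffs (p : ℕ) (h : ℚ[X]) (t : ℕ) (n : ℕ → ℕ) (y : ℕ → ℚ) :
    Prop where
  last : n t = 0
  coeff_ne_zero : ∀ s ≤ t, h.coeff (n s) ≠ 0
  nuQ_coeff : ∀ s ≤ t, nuQ p (h.coeff (n s)) = y s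
  npSlope_lt : ∀ s, 1 ≤ s → s < t → npSlope n y s < npSlope n y (s + 1)
  npLine_le : ∀ s, 1 ≤ s → s ≤ t → ∀ i, h.coeff i ≠ 0 → n s ≤ i → i ≤ n (s - 1) →
    npLine n y s i ≤ nuQ p (h.coeff i)

theorem hasNPVertices_iff {p : ℕ} {h : ℚ[X]} {t : ℕ} {n : ℕ → ℕ} {y : ℕ → ℚ}
    (hdeg : h.natDegree = n 0) (hn : StrictAntiOn n (Set.Iic t)) :
    HasNPVertices p h t (fun s => n 0 - n s) y ↔ HasNPVerticesAtCoeffs p h t n y := by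
  have hle : ∀ s ≤ t, n s ≤ n 0 := fun s hs =>
    hn.antitoneOn (Set.mem_Iic.mpr (Nat.zero_le t)) (Set.mem_Iic.mpr hs) (Nat.zero_le s)
  have hvert : ∀ s ≤ t, n 0 - (n 0 - n s) = n s := fun s hs => by
    have := hle s hs; omega
  unfold HasNPVertices
  simp only [hdeg]
  constructor
  · rintro ⟨-, -, hlast, -, hv, hsl, hl⟩
    refine ⟨?_, fun s hs => ?_, fun s hs => ?_, fun s h1 hs => ?_, fun s h1 hs i hi h2 h3 => ?_⟩
    · have := hle t le_rfl; omega
    · simpa only [hvert s hs] using (hv s hs).1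
    · simpa only [hvert s hs] using (hv s hs).2
    · simpa only [npSlope_eq_abscissa (hle s hs.le) (hle _ (by omega)),
        npSlope_eq_abscissa (hle (s + 1) hs) (hle s hs.le), Nat.add_sub_cancel] using hsl s h1 hs
    · have hi' : i ≤ n 0 := hdeg ▸ le_natDegree_of_ne_zero hi
      have := hle s hs; have := hle (s - 1) (by omega)
      rw [npLine_eq_abscissa (hle s hs) (hle _ (by omega)) hi']
      exact hl s h1 hs i hi (by omega) (by omega)
  · intro hN
    refine ⟨?_, Nat.sub_self _, ?_, fun s hs => ?_, fun s hs => ?_, fun s h1 hs => ?_,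
      fun s h1 hs i hi h2 h3 => ?_⟩
    · simpa only [hN.last] using hN.coeff_ne_zero t le_rfl
    · simp only [hN.last, Nat.sub_zero]
    · have : n (s + 1) < n s := hn (Set.mem_Iic.mpr hs.le) (Set.mem_Iic.mpr hs) s.lt_add_one
      have := hle s hs.le; omega
    · simpa only [hvert s hs] using ⟨hN.coeff_ne_zero s hs, hN.nuQ_coeff s hs⟩
    · simpa only [npSlope_eq_abscissa (hle s hs.le) (hle _ (by omega)),
        npSlope_eq_abscissa (hle (s + 1) hs) (hle s hs.le), Nat.add_sub_cancel]
        using hN.npSlope_lt s h1 hs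
    · have hi' : i ≤ n 0 := hdeg ▸ le_natDegree_of_ne_zero hi
      have := hle s hs; have := hle (s - 1) (by omega)
      rw [← npLine_eq_abscissa (hle s hs) (hle _ (by omega)) hi']
      exact hN.npLine_le s h1 hs i hi (by omega) (by omega)

namespace HasNPVerticesAtCoeffs

variable {p : ℕ} {h : ℚ[X]} {t : ℕ} {n : ℕ → ℕ} {y : ℕ → ℚ}

theorem npLine_le_of_le (hN : HasNPVerticesAtCoeffs p h t n y)
    (hn : StrictAntiOn n (Set.Iic t)) (hdeg : h.natDegree ≤ n 0) {s : ℕ} (hs1 : 1 ≤ s)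
    (hst : s ≤ t) {k : ℕ} (hk : h.coeff k ≠ 0) (hsk : n s ≤ k) :
    npLine n y s k ≤ nuQ p (h.coeff k) := by
  induction s, hs1 using Nat.le_induction with
  | base => exact hN.npLine_le 1 le_rfl hst k hk hsk ((le_natDegree_of_ne_zero hk).trans hdeg)
  | succ s hs1 ih =>
    rcases le_or_gt k (n s) with hks | hks
    · exact hN.npLine_le (s + 1) (by omega) hst k hk hsk hks
    have hlt : n s < n (s - 1) :=
      hn (Set.mem_Iic.mpr (by omega)) (Set.mem_Iic.mpr (by omega)) (by omega)
    calc npLine n y (s + 1) k ≤ npLine n y s k :=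
          npLine_succ_le hlt (hN.npSlope_lt s hs1 (by omega)).le (mod_cast hks.le)
      _ ≤ nuQ p (h.coeff k) := ih (by omega) hks.le

theorem npLine_le_add (hN : HasNPVerticesAtCoeffs p h t n y)
    (hn : StrictAntiOn n (Set.Iic t)) (hdeg : h.natDegree ≤ n 0) {s : ℕ} (hs1 : 1 ≤ s)
    (hst : s ≤ t) {k : ℕ} (hk : h.coeff k ≠ 0) (hsk : n s ≤ k) {α μ : ℚ}
    (hμ : npSlope n y s ≤ μ) (hα : α ≤ k) :
    npLine n y s α ≤ nuQ p (h.coeff k) + μ * (k - α) := by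
  have hline := hN.npLine_le_of_le hn hdeg hs1 hst hk hsk
  have hdiff := npLine_sub_npLine (n := n) (y := y) (s := s) α k
  nlinarith

theorem npLine_lt_add (hN : HasNPVerticesAtCoeffs p h t n y)
    (hn : StrictAntiOn n (Set.Iic t)) (hdeg : h.natDegree ≤ n 0) {s : ℕ} (hs1 : 1 ≤ s)
    (hst : s ≤ t) {k : ℕ} (hk : h.coeff k ≠ 0) (hsk : n s ≤ k) {α μ : ℚ}
    (hμ : npSlope n y s < μ) (hα : α < k) :
    npLine n y s α < nuQ p (h.coeff k) + μ * (k - α) := by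
  have hline := hN.npLine_le_of_le hn hdeg hs1 hst hk hsk
  have hdiff := npLine_sub_npLine (n := n) (y := y) (s := s) α k
  nlinarith

variable [Fact p.Prime] {g f : ℚ[X]} {m : ℕ → ℕ} {c : ℚ} {d : ℕ}

theorem padicAddVal_coeff_comp_vertex (hN : HasNPVerticesAtCoeffs p g t m y)
    (hm : StrictAntiOn m (Set.Iic t)) (hdeg : g.natDegree ≤ m 0) (hd : 0 < d)
    (hfd : f.natDegree = d) (hlead : padicAddVal p (f.coeff d) = 0)
    (hf : ∀ i : ℕ, ((c * (d - i) : ℚ) : WithTop ℚ) ≤ padicAddVal p (f.coeff i))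
    (hslope : ∀ s, 1 ≤ s → s ≤ t → npSlope m y s < c * d) {s : ℕ} (hst : s ≤ t) :
    padicAddVal p ((g.comp f).coeff (d * m s)) = y s := by
  have hgs := hN.coeff_ne_zero s hst
  rw [addValuation_coeff_comp_mul_natDegree _ hd hfd hlead hf hgs, padicAddVal_of_ne_zero hgs,
    hN.nuQ_coeff s hst]
  intro k hk hsk
  rw [padicAddVal_of_ne_zero hgs, padicAddVal_of_ne_zero hk, ← WithTop.coe_add,
    WithTop.coe_lt_coe, hN.nuQ_coeff s hst]
  rcases Nat.eq_zero_or_pos s with rfl | hs1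
  · have := le_natDegree_of_ne_zero hk; omega
  have hlt : m s < m (s - 1) :=
    hm (Set.mem_Iic.mpr (by omega)) (Set.mem_Iic.mpr hst) (by omega)
  calc y s = npLine m y s (m s) := by rw [npLine_of_lt hlt, sub_self, mul_zero, add_zero]
    _ < nuQ p (g.coeff k) + c * d * (k - m s) :=
      hN.npLine_lt_add hm hdeg hs1 hst hk hsk.le (hslope s hs1 hst) (mod_cast hsk)
    _ = nuQ p (g.coeff k) + c * (d * k - d * m s) := by ring

theorem npLine_le_padicAddVal_coeff_comp (hN : HasNPVerticesAtCoeffs p g t m y)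
    (hm : StrictAntiOn m (Set.Iic t)) (hdeg : g.natDegree ≤ m 0) (hd : 0 < d)
    (hfd : f.natDegree ≤ d)
    (hf : ∀ i : ℕ, ((c * (d - i) : ℚ) : WithTop ℚ) ≤ padicAddVal p (f.coeff i))
    (hslope : ∀ s, 1 ≤ s → s ≤ t → npSlope m y s < c * d) {s : ℕ} (hs1 : 1 ≤ s)
    (hst : s ≤ t) {i : ℕ} (hi : d * m s ≤ i) :
    (npLine m y s (i / d) : WithTop ℚ) ≤ padicAddVal p ((g.comp f).coeff i) := by
  refine le_addValuation_coeff_comp _ hfd hf fun k hk hik => ?_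
  rw [padicAddVal_of_ne_zero hk, ← WithTop.coe_add, WithTop.coe_le_coe]
  have hdQ : (0 : ℚ) < d := mod_cast hd
  have hik' : (i : ℚ) / d ≤ k := by rw [div_le_iff₀ hdQ, mul_comm]; exact_mod_cast hik
  calc npLine m y s (i / d) ≤ nuQ p (g.coeff k) + c * d * (k - i / d) :=
        hN.npLine_le_add hm hdeg hs1 hst hk (Nat.le_of_mul_le_mul_left (hi.trans hik) hd)
          (hslope s hs1 hst).le hik'
    _ = nuQ p (g.coeff k) + c * (d * k - i) := by field_simp

theorem comp (hN : HasNPVerticesAtCoeffs p g t m y)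
    (hm : StrictAntiOn m (Set.Iic t)) (hdeg : g.natDegree ≤ m 0) (hd : 0 < d)
    (hfd : f.natDegree = d) (hlead : padicAddVal p (f.coeff d) = 0)
    (hf : ∀ i : ℕ, ((c * (d - i) : ℚ) : WithTop ℚ) ≤ padicAddVal p (f.coeff i))
    (hslope : ∀ s, 1 ≤ s → s ≤ t → npSlope m y s < c * d) :
    HasNPVerticesAtCoeffs p (g.comp f) t (fun s => d * m s) y := by
  have hvert s (hs : s ≤ t) := padicAddVal_eq_coe_iff.mp
    (hN.padicAddVal_coeff_comp_vertex hm hdeg hd hfd hlead hf hslope hs)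
  refine ⟨by simp [hN.last], fun s hs => (hvert s hs).1, fun s hs => (hvert s hs).2,
    fun s hs1 hst => ?_, fun s hs1 hst i hi his _ => ?_⟩
  · rw [npSlope_mul, npSlope_mul]
    exact div_lt_div_of_pos_right (hN.npSlope_lt s hs1 hst) (mod_cast hd)
  · rw [npLine_mul hd.ne']
    exact coe_le_padicAddVal_iff.mp
      (hN.npLine_le_padicAddVal_coeff_comp hm hdeg hd hfd.le hf hslope hs1 hst his) hi

end HasNPVerticesAtCoeffs

theorem newton_polygon_comp_general
    (p : ℕ) (hp : p.Prime)
    (g f : Polynomial ℚ) (e d t : ℕ) (m : ℕ → ℕ)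
    (hge : g.natDegree = e)
    (hm0 : m 0 = e)
    (hmdec : ∀ s, s < t → m (s + 1) < m s)
    (hNPg : HasNPVertices p g t (fun s => e - m s) (fun s => nuQ p (g.coeff (m s))))
    (u : ℤ) (β : ℕ) (hβ : 1 ≤ β) (hβd : β ≤ d)
    (hu : ∀ j, 1 ≤ j → j ≤ t →
      |(nuQ p (g.coeff (m j)) - nuQ p (g.coeff (m (j - 1)))) /
          ((m (j - 1) : ℚ) - (m j : ℚ))| < (u : ℚ))
    (hfd : f.natDegree = d)
    (had : padicValRat p (f.coeff d) = 0)
    (hai : ∀ i, i ≤ d → f.coeff i ≠ 0 →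
      (u : ℚ) / (β : ℚ) * ((d : ℚ) - (i : ℚ)) ≤ nuQ p (f.coeff i)) :
    HasNPVertices p (g.comp f) t
      (fun s => d * (e - m s)) (fun s => nuQ p (g.coeff (m s))) := by
  have := Fact.mk hp
  subst hm0
  have hd : 0 < d := hβ.trans hβd
  have hm : StrictAntiOn m (Set.Iic t) := strictAntiOn_Iic_of_succ_lt hmdec
  rw [hasNPVertices_iff hge hm] at hNPg
  have hslope : ∀ s, 1 ≤ s → s ≤ t →
      npSlope m (fun s => nuQ p (g.coeff (m s))) s < u / β * d := fun s hs1 hst => by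
    have hu_lt : |npSlope m (fun s => nuQ p (g.coeff (m s))) s| < u := hu s hs1 hst
    have hu_le : (u : ℚ) ≤ u / β * d := by
      rw [div_mul_eq_mul_div, le_div_iff₀ (mod_cast hβ)]
      exact mul_le_mul_of_nonneg_left (mod_cast hβd) ((abs_nonneg _).trans hu_lt.le)
    exact ((le_abs_self _).trans_lt hu_lt).trans_le hu_le
  have hf : ∀ i : ℕ, ((u / β * (d - i) : ℚ) : WithTop ℚ) ≤ padicAddVal p (f.coeff i) :=
    fun i => coe_le_padicAddVal_iff.mpr fun hi =>
      hai i (hfd ▸ le_natDegree_of_ne_zero hi) hi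
  have hlead : padicAddVal p (f.coeff d) = 0 := by
    have hf0 : f.coeff d ≠ 0 := by
      rw [← hfd]; exact leadingCoeff_ne_zero.mpr (ne_zero_of_natDegree_gt (hfd ▸ hd))
    simp [padicAddVal_of_ne_zero hf0, nuQ, had]
  have hmul : (fun s => d * (m 0 - m s)) = fun s => d * m 0 - d * m s :=
    funext fun s => Nat.mul_sub d (m 0) (m s)
  rw [hmul]
  exact (hasNPVertices_iff (n := fun s => d * m s) (by rw [natDegree_comp, hge, hfd, mul_comm])
    ((strictMono_mul_left_of_pos hd).comp_strictAntiOn hm)).mpr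
    (hNPg.comp hm hge.le hd hfd hlead hf hslope)

/-- Theorem 1.6 (main thm 2): stretching of the Newton polygon (possibly with
negative slopes) under composition. -/
theorem newton_polygon_comp
    (p : ℕ) (hp : p.Prime)
    (g f : Polynomial ℚ) (e d t : ℕ) (m : ℕ → ℕ)
    (hge : g.natDegree = e) (he1 : 1 ≤ e)
    (hb0 : g.coeff 0 ≠ 0)
    (hm0 : m 0 = e) (hmt : m t = 0)
    (hmdec : ∀ s, s < t → m (s + 1) < m s)
    (hNPg : HasNPVertices p g t (fun s => e - m s) (fun s => nuQ p (g.coeff (m s))))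
    (u : ℤ) (β : ℕ) (hβ : 1 ≤ β) (hβd : β ≤ d)
    (hgcdβu : Int.gcd (β : ℤ) u = 1)
    (hu : ∀ j, 1 ≤ j → j ≤ t →
      |(nuQ p (g.coeff (m j)) - nuQ p (g.coeff (m (j - 1)))) /
          ((m (j - 1) : ℚ) - (m j : ℚ))| < (u : ℚ))
    (hfd : f.natDegree = d)
    (had : padicValRat p (f.coeff d) = 0)
    (hai : ∀ i, i ≤ d → f.coeff i ≠ 0 →
      (u : ℚ) / (β : ℚ) * ((d : ℚ) - (i : ℚ)) ≤ nuQ p (f.coeff i)) :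
    HasNPVertices p (g.comp f) t
      (fun s => d * (e - m s)) (fun s => nuQ p (g.coeff (m s))) :=
  newton_polygon_comp_general p hp g f e d t m hge hm0 hmdec hNPg u β hβ hβd hu hfd had hai
end
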